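/- Let g : [0, R] → ℝ satisfy the hypotheses of the compact monotonicity lemma (g(0)=0, g'(R)=0, g, g' positive in the interior, solving g'' + H g' + (μ + H')g = 0 with H(r) = (m-1)cot r − (k-1)tan r, R < π/4, μ ≥ 2(m+k)). Define G : [0, ∞) → ℝ by G(r) = g(r) for r < R and G(r) = g(R) for r ≥ R. Then the function r ↦ G(r)²·(−H'(r)) = (m−k)·G(r)²/sin²r + (k−1)·G(r)²/(sin²r·cos²r) is nonincreasing on (0, π/4). -/

import Mathlib

/-!
Write `ψ = sin · cos`, `H = (m-1) cot - (k-1) tan` and `I = sin^(m-1) cos^(k-1)`, so that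
`I' = H I`. The Wronskian `W = ψ g' - ψ' g` satisfies `W' = ψ (g'' + 4 g)`, and the ODE turns this
into `(I W)' = (2(m+k) - μ) I ψ g ≤ 0`. As `I(0) = 0`, this forces `W ≤ 0` on `(0, R)`, i.e. `g / ψ`
is nonincreasing on `(0, R]`; beyond `R`, `G / ψ = g(R) / ψ` is nonincreasing because
`ψ = sin(2r) / 2` increases on `(0, π/4]`. Finally `G² (-H') = ((m-k) cos² + (k-1)) (G / ψ)²` is a
product of nonnegative nonincreasing functions.
-/

open Real Set

lemma HasDerivAt.pow_of_ne_zero {f : ℝ → ℝ} {f' x : ℝ} (n : ℕ) (hf : HasDerivAt f f' x)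
    (hx : f x ≠ 0) : HasDerivAt (fun r => f r ^ n) (f x ^ n * (n * (f' / f x))) x := by
  refine (hf.fun_pow n).congr_deriv ?_
  rcases n with _ | n
  · simp
  · field_simp
    push_cast
    ring

lemma AntitoneOn.mul {α M₀ : Type*} [Preorder α] [Mul M₀] [Zero M₀] [Preorder M₀] [PosMulMono M₀]
    [MulPosMono M₀] {s : Set α} {f g : α → M₀} (hf : AntitoneOn f s) (hg : AntitoneOn g s)
    (hf₀ : ∀ x ∈ s, 0 ≤ f x) (hg₀ : ∀ x ∈ s, 0 ≤ g x) : AntitoneOn (f * g) s :=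
  fun _ ha _ hb h ↦ mul_le_mul (hf ha hb h) (hg ha hb h) (hg₀ _ hb) (hf₀ _ ha)

lemma ContDiffOn.hasDerivAt_derivWithin_Icc {g : ℝ → ℝ} {a b x : ℝ}
    (hg : ContDiffOn ℝ 2 g (Icc a b)) (hx : x ∈ Ioo a b) :
    HasDerivAt g (derivWithin g (Icc a b) x) x ∧
      HasDerivAt (derivWithin g (Icc a b)) (deriv (deriv g) x) x := by
  have hIoo : ContDiffOn ℝ 2 g (Ioo a b) := hg.mono Ioo_subset_Icc_self
  have hderiv : derivWithin g (Icc a b) =ᶠ[nhds x] deriv g := by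
    filter_upwards [Ioo_mem_nhds hx.1 hx.2] with y hy
    exact derivWithin_of_mem_nhds (Icc_mem_nhds hy.1 hy.2)
  refine ⟨hderiv.eq_of_nhds ▸ ?_, ?_⟩
  · exact ((hIoo.contDiffAt (Ioo_mem_nhds hx.1 hx.2)).differentiableAt two_ne_zero).hasDerivAt
  · refine HasDerivAt.congr_of_eventuallyEq ?_ hderiv
    exact (((hIoo.deriv_of_isOpen isOpen_Ioo (by norm_num : (1 : WithTop ℕ∞) + 1 ≤ 2)).contDiffAt
      (Ioo_mem_nhds hx.1 hx.2)).differentiableAt one_ne_zero).hasDerivAt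

noncomputable def cotSubTan (p q r : ℝ) : ℝ := p * (cos r / sin r) - q * (sin r / cos r)

section Derivatives

variable {x : ℝ}

lemma hasDerivAt_sin_mul_cos (x : ℝ) :
    HasDerivAt (fun r => sin r * cos r) (cos x ^ 2 - sin x ^ 2) x := by
  refine ((hasDerivAt_sin x).fun_mul (hasDerivAt_cos x)).congr_deriv ?_
  ring

lemma hasDerivAt_cos_sq_sub_sin_sq (x : ℝ) :
    HasDerivAt (fun r => cos r ^ 2 - sin r ^ 2) (-4 * (sin x * cos x)) x := by
  refine (((hasDerivAt_cos x).fun_pow 2).fun_sub ((hasDerivAt_sin x).fun_pow 2)).congr_deriv ?_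
  push_cast
  ring

lemma hasDerivAt_cotSubTan (p q : ℝ) (hs : sin x ≠ 0) (hc : cos x ≠ 0) :
    HasDerivAt (cotSubTan p q) (-(p / sin x ^ 2 + q / cos x ^ 2)) x := by
  refine ((((hasDerivAt_cos x).div (hasDerivAt_sin x) hs).const_mul p).fun_sub
    (((hasDerivAt_sin x).div (hasDerivAt_cos x) hc).const_mul q)).congr_deriv ?_
  field_simp
  linear_combination -(p * cos x ^ 2 + q * sin x ^ 2) * sin_sq_add_cos_sq x

lemma hasDerivAt_sin_pow_mul_cos_pow (n b : ℕ) (hs : sin x ≠ 0) (hc : cos x ≠ 0) :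
    HasDerivAt (fun r => sin r ^ n * cos r ^ b) (sin x ^ n * cos x ^ b * cotSubTan n b x) x := by
  refine (((hasDerivAt_sin x).pow_of_ne_zero n hs).fun_mul
    ((hasDerivAt_cos x).pow_of_ne_zero b hc)).congr_deriv ?_
  unfold cotSubTan
  ring

lemma hasDerivAt_sin_mul_cos_wronskian {g g' : ℝ → ℝ} {g'' : ℝ} (hg : HasDerivAt g (g' x) x)
    (hg' : HasDerivAt g' g'' x) :
    HasDerivAt (fun r => sin r * cos r * g' r - (cos r ^ 2 - sin r ^ 2) * g r)
      (sin x * cos x * (g'' + 4 * g x)) x := by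
  refine (((hasDerivAt_sin_mul_cos x).fun_mul hg').fun_sub
    ((hasDerivAt_cos_sq_sub_sin_sq x).fun_mul hg)).congr_deriv ?_
  ring

lemma hasDerivAt_integratingFactor_mul_wronskian (n b : ℕ) {μ : ℝ} {g g' : ℝ → ℝ} {g'' : ℝ}
    (hs : sin x ≠ 0) (hc : cos x ≠ 0) (hg : HasDerivAt g (g' x) x) (hg' : HasDerivAt g' g'' x)
    (hODE : g'' + cotSubTan n b x * g' x + (μ - (n / sin x ^ 2 + b / cos x ^ 2)) * g x = 0) :
    HasDerivAt
      (fun r => sin r ^ n * cos r ^ b * (sin r * cos r * g' r - (cos r ^ 2 - sin r ^ 2) * g r))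
      (sin x ^ n * cos x ^ b * (sin x * cos x) * ((2 * (n + b + 2) - μ) * g x)) x := by
  refine ((hasDerivAt_sin_pow_mul_cos_pow n b hs hc).fun_mul
    (hasDerivAt_sin_mul_cos_wronskian hg hg')).congr_deriv ?_
  unfold cotSubTan at hODE ⊢
  field_simp at hODE ⊢
  linear_combination hODE - g x * (n * cos x ^ 2 + b * sin x ^ 2) * sin_sq_add_cos_sq x

end Derivatives

lemma sin_pos_and_cos_pos {x : ℝ} (hx : x ∈ Ioo 0 (π / 2)) : 0 < sin x ∧ 0 < cos x :=
  ⟨sin_pos_of_pos_of_lt_pi hx.1 (by linarith [hx.2, pi_pos]),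
    cos_pos_of_mem_Ioo ⟨by linarith [hx.1, pi_pos], hx.2⟩⟩

lemma sin_mul_cos_wronskian_nonpos (n b : ℕ) (hn : n ≠ 0) {R μ : ℝ} (hR : R < π / 2)
    (hμ : 2 * (n + b + 2) ≤ μ) {g g' g'' : ℝ → ℝ}
    (hgc : ContinuousOn g (Icc 0 R)) (hg'c : ContinuousOn g' (Icc 0 R))
    (hg : ∀ x ∈ Ioo 0 R, HasDerivAt g (g' x) x) (hg' : ∀ x ∈ Ioo 0 R, HasDerivAt g' (g'' x) x)
    (hg_nonneg : ∀ x ∈ Ioo 0 R, 0 ≤ g x)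
    (hODE : ∀ x ∈ Ioo 0 R,
      g'' x + cotSubTan n b x * g' x + (μ - (n / sin x ^ 2 + b / cos x ^ 2)) * g x = 0) :
    ∀ x ∈ Ioo 0 R, sin x * cos x * g' x - (cos x ^ 2 - sin x ^ 2) * g x ≤ 0 := by
  intro x hx
  have hsc : ∀ y ∈ Ioo 0 R, 0 < sin y ∧ 0 < cos y := fun y hy =>
    sin_pos_and_cos_pos ⟨hy.1, hy.2.trans hR⟩
  set W := fun r => sin r ^ n * cos r ^ b * (sin r * cos r * g' r - (cos r ^ 2 - sin r ^ 2) * g r)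
  have hW : AntitoneOn W (Icc 0 R) := by
    refine antitoneOn_of_hasDerivWithinAt_nonpos (convex_Icc 0 R) (by fun_prop)
      (f' := fun y => sin y ^ n * cos y ^ b * (sin y * cos y) * ((2 * (n + b + 2) - μ) * g y))
      (fun y hy => ?_) (fun y hy => ?_)
    · rw [interior_Icc] at hy
      exact (hasDerivAt_integratingFactor_mul_wronskian n b (hsc y hy).1.ne' (hsc y hy).2.ne'
        (hg y hy) (hg' y hy) (hODE y hy)).hasDerivWithinAt
    · rw [interior_Icc] at hy
      obtain ⟨hs, hc⟩ := hsc y hy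
      exact mul_nonpos_of_nonneg_of_nonpos (by positivity)
        (mul_nonpos_of_nonpos_of_nonneg (by linarith) (hg_nonneg y hy))
  have hW0 : W 0 = 0 := by simp [W, hn]
  have hWx : W x ≤ 0 :=
    hW0 ▸ hW (left_mem_Icc.2 (hx.1.trans hx.2).le) (Ioo_subset_Icc_self hx) hx.1.le
  obtain ⟨hs, hc⟩ := hsc x hx
  exact nonpos_of_mul_nonpos_right hWx (by positivity)

lemma antitoneOn_div_sin_mul_cos {R : ℝ} (hR : R < π / 2) {g g' : ℝ → ℝ}
    (hgc : ContinuousOn g (Ioc 0 R)) (hg : ∀ x ∈ Ioo 0 R, HasDerivAt g (g' x) x)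
    (hW : ∀ x ∈ Ioo 0 R, sin x * cos x * g' x - (cos x ^ 2 - sin x ^ 2) * g x ≤ 0) :
    AntitoneOn (fun r => g r / (sin r * cos r)) (Ioc 0 R) := by
  have hsc : ∀ y ∈ Ioc 0 R, sin y * cos y ≠ 0 := fun y hy =>
    have h := sin_pos_and_cos_pos ⟨hy.1, hy.2.trans_lt hR⟩
    (mul_pos h.1 h.2).ne'
  refine antitoneOn_of_hasDerivWithinAt_nonpos (convex_Ioc 0 R) (hgc.div (by fun_prop) hsc)
    (f' := fun y => (g' y * (sin y * cos y) - g y * (cos y ^ 2 - sin y ^ 2)) / (sin y * cos y) ^ 2)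
    (fun x hx => ?_) (fun x hx => ?_)
  · rw [interior_Ioc] at hx
    exact ((hg x hx).div (hasDerivAt_sin_mul_cos x)
      (hsc x (Ioo_subset_Ioc_self hx))).hasDerivWithinAt
  · rw [interior_Ioc] at hx
    exact div_nonpos_of_nonpos_of_nonneg (by linarith [hW x hx]) (sq_nonneg _)

lemma antitoneOn_div_sin_mul_cos_of_ode (n b : ℕ) (hn : n ≠ 0) {R μ : ℝ} (hR0 : 0 < R)
    (hR : R < π / 2) (hμ : 2 * (n + b + 2) ≤ μ) {g : ℝ → ℝ} (hg : ContDiffOn ℝ 2 g (Icc 0 R))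
    (hg_nonneg : ∀ x ∈ Ioc 0 R, 0 ≤ g x)
    (hODE : ∀ x ∈ Ioo 0 R, deriv (deriv g) x + cotSubTan n b x * deriv g x
      + (μ + deriv (cotSubTan n b) x) * g x = 0) :
    AntitoneOn (fun r => g r / (sin r * cos r)) (Ioc 0 R) := by
  have hdg := fun x (hx : x ∈ Ioo 0 R) => hg.hasDerivAt_derivWithin_Icc hx
  refine antitoneOn_div_sin_mul_cos hR (hg.continuousOn.mono Ioc_subset_Icc_self)
    (fun x hx => (hdg x hx).1) <| sin_mul_cos_wronskian_nonpos n b hn hR hμ hg.continuousOn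
    (hg.continuousOn_derivWithin (uniqueDiffOn_Icc hR0) one_le_two) (fun x hx => (hdg x hx).1)
    (fun x hx => (hdg x hx).2) (fun x hx => hg_nonneg x (Ioo_subset_Ioc_self hx)) fun x hx => ?_
  have hsc := sin_pos_and_cos_pos ⟨hx.1, hx.2.trans hR⟩
  have h := hODE x hx
  rw [(hasDerivAt_cotSubTan _ _ hsc.1.ne' hsc.2.ne').deriv,
    ← derivWithin_of_mem_nhds (f := g) (Icc_mem_nhds hx.1 hx.2)] at h
  linear_combination h

lemma monotoneOn_sin_mul_cos : MonotoneOn (fun r => sin r * cos r) (Icc 0 (π / 4)) := by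
  intro x hx y hy hxy
  have h2 : sin (2 * x) ≤ sin (2 * y) :=
    strictMonoOn_sin.monotoneOn ⟨by linarith [hx.1, pi_pos], by linarith [hx.2]⟩
      ⟨by linarith [hy.1, pi_pos], by linarith [hy.2]⟩ (by linarith)
  simp only [sin_two_mul] at h2
  linarith

lemma antitoneOn_div_sin_mul_cos_extend {R : ℝ} (hR : 0 < R) (hR4 : R < π / 4) {g G : ℝ → ℝ}
    (hG : ∀ r, G r = if r < R then g r else g R) (hgR : 0 ≤ g R)
    (hg : AntitoneOn (fun r => g r / (sin r * cos r)) (Ioc 0 R)) :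
    AntitoneOn (fun r => G r / (sin r * cos r)) (Ioo 0 (π / 4)) := by
  have hleft : AntitoneOn (fun r => G r / (sin r * cos r)) (Ioc 0 R) := by
    refine hg.congr fun r hr => ?_
    rw [hG]
    split_ifs with h
    · rfl
    · rw [le_antisymm hr.2 (not_lt.1 h)]
  have hright : AntitoneOn (fun r => G r / (sin r * cos r)) (Icc R (π / 4)) := by
    intro x hx y hy hxy
    have hsc := sin_pos_and_cos_pos (x := x) ⟨hR.trans_le hx.1, by linarith [hx.2, pi_pos]⟩
    simp only [hG, if_neg (not_lt.2 hx.1), if_neg (not_lt.2 hy.1)]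
    exact div_le_div_of_nonneg_left hgR (mul_pos hsc.1 hsc.2)
      (monotoneOn_sin_mul_cos ⟨(hR.trans_le hx.1).le, hx.2⟩ ⟨(hR.trans_le hy.1).le, hy.2⟩ hxy)
  refine (hleft.union_right hright ⟨right_mem_Ioc.2 hR, fun _ h => h.2⟩
    ⟨left_mem_Icc.2 hR4.le, fun _ h => h.1⟩).mono fun r hr => ?_
  rcases le_or_gt r R with h | h
  · exact Or.inl ⟨hr.1, h⟩
  · exact Or.inr ⟨h.le, hr.2.le⟩

lemma antitoneOn_mul_cos_sq_add {p : ℝ} (hp : 0 ≤ p) (q : ℝ) :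
    AntitoneOn (fun r => p * cos r ^ 2 + q) (Icc 0 (π / 2)) := by
  intro x hx y hy hxy
  have hcy : 0 ≤ cos y := cos_nonneg_of_mem_Icc ⟨by linarith [hy.1, pi_pos], hy.2⟩
  have hcos : cos y ≤ cos x := cos_le_cos_of_nonneg_of_le_pi hx.1 (by linarith [hy.2, pi_pos]) hxy
  dsimp only
  gcongr

lemma antitoneOn_mul_sq_div_sin_sq_add {p q : ℝ} (hp : 0 ≤ p) (hq : 0 ≤ q) {s : Set ℝ}
    (hs : s ⊆ Ioo 0 (π / 2)) {G : ℝ → ℝ} (hG₀ : ∀ r ∈ s, 0 ≤ G r)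
    (hG : AntitoneOn (fun r => G r / (sin r * cos r)) s) :
    AntitoneOn (fun r => p * G r ^ 2 / sin r ^ 2 + q * G r ^ 2 / (sin r ^ 2 * cos r ^ 2)) s := by
  have hsc : ∀ r ∈ s, 0 < sin r ∧ 0 < cos r := fun r hr => sin_pos_and_cos_pos (hs hr)
  have hφ₀ : ∀ r ∈ s, 0 ≤ G r / (sin r * cos r) := fun r hr =>
    div_nonneg (hG₀ r hr) (mul_pos (hsc r hr).1 (hsc r hr).2).le
  refine ((antitoneOn_mul_cos_sq_add hp q).mono (hs.trans Ioo_subset_Icc_self)).mul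
    (fun x hx y hy hxy => pow_le_pow_left₀ (hφ₀ y hy) (hG hx hy hxy) 2)
    (fun r _ => by positivity) (fun r hr => sq_nonneg _) |>.congr fun r hr => ?_
  obtain ⟨hsin, hcos⟩ := hsc r hr
  simp only [Pi.mul_apply]
  field_simp

theorem weight_antitone_compact_general (m k : ℕ) (hm : 2 ≤ m) (hk : 1 ≤ k) (hkm : k ≤ m)
    (R μ : ℝ) (hR : 0 < R) (hR4 : R < π / 4) (hμ : 2 * ((m : ℝ) + k) ≤ μ)
    (g : ℝ → ℝ) (hg : ContDiffOn ℝ 2 g (Icc 0 R))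
    (hgpos : ∀ r ∈ Ioc 0 R, 0 < g r)
    (hODE : ∀ r ∈ Ioo 0 R,
      deriv (deriv g) r
        + (((m : ℝ) - 1) * (Real.cos r / Real.sin r)
            - ((k : ℝ) - 1) * (Real.sin r / Real.cos r)) * deriv g r
        + (μ + deriv (fun t : ℝ => ((m : ℝ) - 1) * (Real.cos t / Real.sin t)
            - ((k : ℝ) - 1) * (Real.sin t / Real.cos t)) r) * g r = 0)
    (G : ℝ → ℝ) (hG : ∀ r : ℝ, G r = if r < R then g r else g R) :
    AntitoneOn (fun r => ((m : ℝ) - k) * G r ^ 2 / Real.sin r ^ 2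
        + ((k : ℝ) - 1) * G r ^ 2 / (Real.sin r ^ 2 * Real.cos r ^ 2))
      (Ioo 0 (π / 4)) := by
  have hR2 : R < π / 2 := by linarith [pi_pos]
  have hm1 : ((m - 1 : ℕ) : ℝ) = m - 1 := by rw [Nat.cast_sub (by omega), Nat.cast_one]
  have hk1 : ((k - 1 : ℕ) : ℝ) = k - 1 := by rw [Nat.cast_sub hk, Nat.cast_one]
  rw [← hm1, ← hk1] at hODE
  have hφ := antitoneOn_div_sin_mul_cos_of_ode (m - 1) (k - 1) (by omega) hR hR2
    (by rw [hm1, hk1]; linarith) hg (fun x hx => (hgpos x hx).le) hODE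
  have hgR : 0 < g R := hgpos R ⟨hR, le_rfl⟩
  have hG₀ : ∀ r ∈ Ioo 0 (π / 4), 0 ≤ G r := fun r hr => by
    rw [hG]
    split_ifs with h
    exacts [(hgpos r ⟨hr.1, h.le⟩).le, hgR.le]
  exact antitoneOn_mul_sq_div_sin_sq_add (sub_nonneg.2 (by exact_mod_cast hkm))
    (sub_nonneg.2 (by exact_mod_cast hk)) (Ioo_subset_Ioo_right (by linarith [pi_pos])) hG₀
    (antitoneOn_div_sin_mul_cos_extend hR hR4 hG hgR.le hφ)

/-- The weight `G²·(−H')` is nonincreasing on `(0, π/4)` in the compact case. -/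
theorem weight_antitone_compact (m k : ℕ) (hm : 2 ≤ m) (hk : 1 ≤ k) (hkm : k ≤ m)
    (R μ : ℝ) (hR : 0 < R) (hR4 : R < π / 4) (hμ : 2 * ((m : ℝ) + k) ≤ μ)
    (g : ℝ → ℝ) (hg : ContDiffOn ℝ 2 g (Icc 0 R))
    (hg0 : g 0 = 0) (hgR : deriv g R = 0)
    (hgpos : ∀ r ∈ Ioc 0 R, 0 < g r)
    (hg'pos : ∀ r ∈ Ico 0 R, 0 < deriv g r)
    (hODE : ∀ r ∈ Ioo 0 R,
      deriv (deriv g) r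
        + (((m : ℝ) - 1) * (Real.cos r / Real.sin r)
            - ((k : ℝ) - 1) * (Real.sin r / Real.cos r)) * deriv g r
        + (μ + deriv (fun t : ℝ => ((m : ℝ) - 1) * (Real.cos t / Real.sin t)
            - ((k : ℝ) - 1) * (Real.sin t / Real.cos t)) r) * g r = 0)
    (G : ℝ → ℝ) (hG : ∀ r : ℝ, G r = if r < R then g r else g R) :
    AntitoneOn (fun r => ((m : ℝ) - k) * G r ^ 2 / Real.sin r ^ 2
        + ((k : ℝ) - 1) * G r ^ 2 / (Real.sin r ^ 2 * Real.cos r ^ 2))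
      (Ioo 0 (π / 4)) :=
  weight_antitone_compact_general m k hm hk hkm R μ hR hR4 hμ g hg hgpos hODE G hG
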